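/- Let n ≥ 2 be an integer, α ∈ [0,1), c̃ > 0, λ := arccosh((1 + c̃⁻¹)/(1 − α)), and let B be the (n−1)×(n−1) tridiagonal matrix with diagonal entries 1 + c̃⁻¹ and off-diagonal entries −(1−α)/2. Let b := B⁻¹𝟙, where 𝟙 ∈ ℝ^{n−1} is the all-ones vector, with the convention b_0 = b_n = 0. Then for every 1 ≤ j ≤ n, ((1−α)/2)·(b_j − b_{j−1}) = sinh((((n+1)/2) − j)λ) / (sinh(((n+1)/2)λ) − sinh(((n−1)/2)λ)). -/

import Mathlib

open Real Matrix Finset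

noncomputable section

/-- Real inverse hyperbolic cosine. -/
def arcosh (x : ℝ) : ℝ := Real.log (x + Real.sqrt (x ^ 2 - 1))

/-- The regularized reduced kernel matrix: tridiagonal with diagonal `1 + c̃⁻¹`
and off-diagonal `−(1−α)/2`. -/
def Bmat (n : ℕ) (α ctil : ℝ) : Matrix (Fin (n - 1)) (Fin (n - 1)) ℝ :=
  fun i j =>
    if i = j then 1 + ctil⁻¹
    else if (i : ℕ) + 1 = (j : ℕ) ∨ (j : ℕ) + 1 = (i : ℕ) then -((1 - α) / 2)
    else 0

/-- Entry `j` (1-based) of `b := B⁻¹𝟙`, with the convention `b₀ = bₙ = 0`. -/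
def bAt (n : ℕ) (α ctil : ℝ) (j : ℕ) : ℝ :=
  if h : 1 ≤ j ∧ j ≤ n - 1 then
    ((Bmat n α ctil)⁻¹ *ᵥ fun _ => (1 : ℝ)) ⟨j - 1, by omega⟩
  else 0

/-! With `q = (1 - α) / 2` and `cosh λ = (1 + c̃⁻¹) / (1 - α)`, the system `B b = 𝟙` together with
`b₀ = bₙ = 0` is the boundary value problem `2 q cosh λ · b_k - q (b_{k-1} + b_{k+1}) = 1`.
Because `cosh (s - λ) + cosh (s + λ) = 2 cosh s cosh λ`, it is solved by the profile
`b_k = (cosh (nλ/2) - cosh ((k - n/2) λ)) / (2 q (cosh λ - 1) cosh (nλ/2))`, symmetric about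
`n/2`, and `B` is invertible because it is strictly diagonally dominant (`2q < 2q cosh λ`).
The discrete derivative of the profile is a difference of hyperbolic cosines, which the addition
formulas turn into the stated quotient of hyperbolic sines. -/

def tridiag (m : ℕ) (d e : ℝ) : Matrix (Fin m) (Fin m) ℝ :=
  fun i j => if i = j then d else if (i : ℕ) + 1 = j ∨ (j : ℕ) + 1 = i then e else 0

lemma Bmat_eq_tridiag (n : ℕ) (α ctil : ℝ) :
    Bmat n α ctil = tridiag (n - 1) (1 + ctil⁻¹) (-((1 - α) / 2)) := rfl

lemma tridiag_det_ne_zero {m : ℕ} {d e : ℝ} (h : 2 * |e| < |d|) : (tridiag m d e).det ≠ 0 := by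
  refine det_ne_zero_of_sum_row_lt_diag fun k => ?_
  let adj := fun j : Fin m => (k : ℕ) + 1 = j ∨ (j : ℕ) + 1 = k
  have hoff : ∀ j ∈ univ.erase k, ‖tridiag m d e k j‖ = if adj j then |e| else 0 := by
    intro j hj
    simp only [tridiag, if_neg (ne_of_mem_erase hj).symm, adj]
    split_ifs <;> simp
  have hcard : #((univ.erase k).filter adj) ≤ 2 :=
    calc #((univ.erase k).filter adj) = #(((univ.erase k).filter adj).image Fin.val) :=
          (card_image_of_injective _ Fin.val_injective).symm
      _ ≤ #({(k : ℕ) - 1, (k : ℕ) + 1} : Finset ℕ) :=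
          card_le_card fun x => by simp [adj]; omega
      _ ≤ 2 := card_le_two
  rw [sum_congr rfl hoff, ← sum_filter, sum_const, nsmul_eq_mul]
  simp only [tridiag, Real.norm_eq_abs]
  calc _ ≤ 2 * |e| := by gcongr; exact_mod_cast hcard
    _ < |d| := h

lemma tridiag_mulVec_apply {m : ℕ} (d e : ℝ) {f : ℕ → ℝ} (h0 : f 0 = 0) (hm : f (m + 1) = 0)
    (i : Fin m) :
    (tridiag m d e *ᵥ fun j => f (j + 1)) i = d * f (i + 1) + e * (f i + f (i + 2)) := by
  have hsplit : ∀ x : ℕ,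
      (if (i : ℕ) = x then d else if (i : ℕ) + 1 = x ∨ x + 1 = i then e else 0) * f (x + 1) =
        (if (i : ℕ) = x then d * f (x + 1) else 0) +
          e * ((if x + 1 = i then f (x + 1) else 0) +
            if (i : ℕ) + 1 = x then f (x + 1) else 0) := by
    intro x
    split_ifs <;> first | omega | ring
  simp only [mulVec, dotProduct, tridiag, Fin.ext_iff]
  rw [Fin.sum_univ_eq_sum_range fun x =>
    (if (i : ℕ) = x then d else if (i : ℕ) + 1 = x ∨ x + 1 = i then e else 0) * f (x + 1)]
  simp only [hsplit, sum_add_distrib, ← mul_sum, sum_ite_eq, mem_range, i.isLt, if_true]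
  have hbelow : (∑ x ∈ range m, if x + 1 = i then f (x + 1) else 0) = f i := by
    cases h : (i : ℕ) with
    | zero => simp [h0]
    | succ k => simp [show k < m by omega]
  have habove : (if (i : ℕ) + 1 < m then f (i + 1 + 1) else 0) = f (i + 2) := by
    split_ifs with h
    · rfl
    · rw [show (i : ℕ) + 2 = m + 1 by omega, hm]
  rw [hbelow, habove]

lemma tridiag_inv_mulVec_eq {m : ℕ} {d e : ℝ} (hde : 2 * |e| < |d|) {f : ℕ → ℝ} (h0 : f 0 = 0)
    (hm : f (m + 1) = 0) {v : Fin m → ℝ}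
    (hf : ∀ i : Fin m, d * f (i + 1) + e * (f i + f (i + 2)) = v i) :
    (tridiag m d e)⁻¹ *ᵥ v = fun i : Fin m => f (i + 1) := by
  have hsol : tridiag m d e *ᵥ (fun i : Fin m => f (i + 1)) = v :=
    funext fun i => (tridiag_mulVec_apply d e h0 hm i).trans (hf i)
  rw [← hsol, mulVec_mulVec, nonsing_inv_mul _ (isUnit_iff_ne_zero.mpr (tridiag_det_ne_zero hde)),
    one_mulVec]

def coshProfile (N q l t : ℝ) : ℝ :=
  (cosh (N * l / 2) - cosh ((t - N / 2) * l)) / (2 * q * (cosh l - 1) * cosh (N * l / 2))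

section coshProfile

variable (N : ℝ) {q l : ℝ}

lemma coshProfile_zero : coshProfile N q l 0 = 0 := by
  rw [coshProfile, show (0 - N / 2) * l = -(N * l / 2) by ring, cosh_neg, sub_self, zero_div]

lemma coshProfile_self : coshProfile N q l N = 0 := by
  rw [coshProfile, show (N - N / 2) * l = N * l / 2 by ring, sub_self, zero_div]

lemma coshProfile_recurrence (hq : q ≠ 0) (hl : l ≠ 0) (t : ℝ) :
    2 * q * cosh l * coshProfile N q l (t + 1) -
      q * (coshProfile N q l t + coshProfile N q l (t + 2)) = 1 := by
  have hl1 : cosh l - 1 ≠ 0 := sub_ne_zero.mpr (one_lt_cosh.mpr hl).ne'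
  have hc : cosh (N * l / 2) ≠ 0 := (cosh_pos _).ne'
  rw [coshProfile, coshProfile, coshProfile, show (t - N / 2) * l = (t + 1 - N / 2) * l - l by ring,
    show (t + 2 - N / 2) * l = (t + 1 - N / 2) * l + l by ring, cosh_sub, cosh_add]
  field_simp
  ring

lemma coshProfile_sub (hq : q ≠ 0) (hl : l ≠ 0) (t : ℝ) :
    q * (coshProfile N q l t - coshProfile N q l (t - 1)) =
      sinh (((N + 1) / 2 - t) * l) / (sinh ((N + 1) / 2 * l) - sinh ((N - 1) / 2 * l)) := by
  set x := ((N + 1) / 2 - t) * l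
  have hnum : cosh ((t - 1 - N / 2) * l) - cosh ((t - N / 2) * l) = 2 * sinh x * sinh (l / 2) := by
    rw [show (t - 1 - N / 2) * l = -(x + l / 2) by ring,
      show (t - N / 2) * l = -(x - l / 2) by ring,
      cosh_neg, cosh_neg, cosh_add, cosh_sub]
    ring
  have hden : sinh ((N + 1) / 2 * l) - sinh ((N - 1) / 2 * l) =
      2 * cosh (N * l / 2) * sinh (l / 2) := by
    rw [show (N + 1) / 2 * l = N * l / 2 + l / 2 by ring,
      show (N - 1) / 2 * l = N * l / 2 - l / 2 by ring, sinh_add, sinh_sub]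
    ring
  have hcosh : cosh l - 1 = 2 * sinh (l / 2) ^ 2 := by
    have h := cosh_two_mul (l / 2)
    rw [mul_div_cancel₀ l two_ne_zero] at h
    linear_combination h + cosh_sq (l / 2)
  have hs : sinh (l / 2) ≠ 0 := sinh_ne_zero.mpr (by positivity)
  have hc : cosh (N * l / 2) ≠ 0 := (cosh_pos _).ne'
  rw [coshProfile, coshProfile, div_sub_div_same, sub_sub_sub_cancel_left, hnum, hden, hcosh]
  field_simp

end coshProfile

lemma bAt_eq_coshProfile {n : ℕ} {α ctil l : ℝ} (hα : α < 1) (hl : l ≠ 0)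
    (hcosh : (1 - α) * cosh l = 1 + ctil⁻¹) {k : ℕ} (hk : k ≤ n) :
    bAt n α ctil k = coshProfile n ((1 - α) / 2) l k := by
  have hq : 0 < (1 - α) / 2 := by linarith
  unfold bAt
  split_ifs with hk'
  · have hde : 2 * |-((1 - α) / 2)| < |1 + ctil⁻¹| := by
      rw [← hcosh, abs_neg, abs_of_pos hq, abs_of_pos (by positivity)]
      nlinarith [one_lt_cosh.mpr hl]
    have hn : 1 ≤ n := by omega
    rw [Bmat_eq_tridiag,
      tridiag_inv_mulVec_eq hde (f := fun k : ℕ => coshProfile n ((1 - α) / 2) l k)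
        (by simpa using coshProfile_zero n)
        (by simpa [Nat.sub_add_cancel hn] using coshProfile_self n)]
    · simp only [Nat.sub_add_cancel hk'.1]
    · intro i
      push_cast
      rw [← hcosh]
      linear_combination coshProfile_recurrence n hq.ne' hl (i : ℝ)
  · obtain rfl | rfl : k = 0 ∨ k = n := by omega
    · simpa using (coshProfile_zero n).symm
    · exact (coshProfile_self _).symm

theorem ti_rank_closed_form_general
    (n : ℕ) (α ctil : ℝ) (hα0 : 0 ≤ α) (hα1 : α < 1) (hc : 0 < ctil) :
    ∀ j : ℕ, 1 ≤ j → j ≤ n →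
      ((1 - α) / 2) * (bAt n α ctil j - bAt n α ctil (j - 1)) =
        Real.sinh ((((n : ℝ) + 1) / 2 - (j : ℝ)) * _root_.arcosh ((1 + ctil⁻¹) / (1 - α))) /
          (Real.sinh (((n : ℝ) + 1) / 2 * _root_.arcosh ((1 + ctil⁻¹) / (1 - α))) -
            Real.sinh (((n : ℝ) - 1) / 2 * _root_.arcosh ((1 + ctil⁻¹) / (1 - α)))) := by
  intro j hj1 hjn
  have hx : 1 < (1 + ctil⁻¹) / (1 - α) := by
    rw [one_lt_div (by linarith)]
    linarith [inv_pos.mpr hc]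
  set l := _root_.arcosh ((1 + ctil⁻¹) / (1 - α))
  have hl : l ≠ 0 := (Real.arcosh_pos hx).ne'
  have hcosh : (1 - α) * cosh l = 1 + ctil⁻¹ := by
    rw [show l = Real.arcosh _ from rfl, Real.cosh_arcosh hx.le]
    field_simp [show 1 - α ≠ 0 by linarith]
  rw [bAt_eq_coshProfile hα1 hl hcosh hjn, bAt_eq_coshProfile hα1 hl hcosh (by omega),
    Nat.cast_pred hj1]
  exact coshProfile_sub _ (by linarith) hl _

/-- The emergent TI rank: the discrete derivative of `B⁻¹𝟙`, in closed form. -/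
theorem ti_rank_closed_form
    (n : ℕ) (hn : 2 ≤ n) (α ctil : ℝ) (hα0 : 0 ≤ α) (hα1 : α < 1) (hc : 0 < ctil) :
    ∀ j : ℕ, 1 ≤ j → j ≤ n →
      ((1 - α) / 2) * (bAt n α ctil j - bAt n α ctil (j - 1)) =
        Real.sinh ((((n : ℝ) + 1) / 2 - (j : ℝ)) * _root_.arcosh ((1 + ctil⁻¹) / (1 - α))) /
          (Real.sinh (((n : ℝ) + 1) / 2 * _root_.arcosh ((1 + ctil⁻¹) / (1 - α))) -
            Real.sinh (((n : ℝ) - 1) / 2 * _root_.arcosh ((1 + ctil⁻¹) / (1 - α)))) :=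
  ti_rank_closed_form_general n α ctil hα0 hα1 hc
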